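/- arXiv:2501.11683 — 2 statements merged into one kernel-verified Lean document; each statement's English description precedes it below -/
import Mathlib

section
/- Let $(v, w, W)$ be a 0-1 Knapsack instance with $n$ items, values $v_i \in \mathbb{N}$, weights $w_i \in \mathbb{N}$, and capacity $W \in \mathbb{N}$. Construct the FAB-Aggro instance with $n$ cards having attack values $a_i = v_i$, pitch costs $t_i = w_i$, pitch resources $r_i = 0$, and base resource amount $R_0 = W$. Then the maximum of $\sum_i v_i x_i$ over all selections $x : \{1,\dots,n\} \to \{0,1\}$ with $\sum_i w_i x_i \le W$ equals the maximum of $\sum_i a_i x_i$ over all feasible plays $(x, y)$ of the constructed FAB-Aggro instance. -/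
/-- For a 0-1 Knapsack instance `(v, w, W)` with `n` items, and the
FAB-Aggro instance constructed with `a = v`, `t = w`, `r = 0`, `R₀ = W`, the maximum
knapsack value over feasible selections equals the maximum total attack over
feasible plays. -/
theorem fab_aggro_knapsack_max_eq (n : ℕ) (v w : Fin n → ℕ) (W : ℕ) :
    sSup {z : ℕ | ∃ x : Fin n → ℕ, (∀ i, x i ≤ 1) ∧
        (∑ i, w i * x i) ≤ W ∧ z = ∑ i, v i * x i} =
    sSup {z : ℕ | ∃ x y : Fin n → ℕ, (∀ i, x i + y i ≤ 1) ∧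
        (∑ i, w i * x i) ≤ (∑ i, 0 * y i) + W ∧ z = ∑ i, v i * x i} := by
  congr 1
  ext z
  simp only [Set.mem_setOf_eq, Finset.sum_const_zero, zero_mul, zero_add]
  constructor
  · rintro ⟨x, hx, hw, hz⟩
    exact ⟨x, fun _ => 0, fun i => by simpa using hx i, hw, hz⟩
  · rintro ⟨x, y, hxy, hw, hz⟩
    exact ⟨x, fun i => le_trans (Nat.le_add_right _ _) (hxy i), hw, hz⟩
end

section
/- Let $(v, w, W)$ be a 0-1 Knapsack instance with $n$ items, and construct the FAB-Aggro instance with attack values $a_i = v_i$, pitch costs $t_i = w_i$, pitch resources $r_i = 0$, and base resource amount $R_0 = W$. Then for every threshold $k \in \mathbb{N}$: there exists a feasible Knapsack selection $x$ with value $\sum_i v_i x_i \ge k$ if and only if there exists a feasible play $(x, y)$ of the FAB-Aggro instance with total attack $\sum_i a_i x_i \ge k$. -/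
/-- For a 0-1 Knapsack instance `(v, w, W)` and the FAB-Aggro instance
constructed with `a = v`, `t = w`, `r = 0`, `R₀ = W`: for every threshold `k`, there
is a feasible knapsack selection of value at least `k` iff there is a feasible play
of the FAB-Aggro instance with total attack at least `k`. -/
theorem fab_aggro_knapsack_decision_iff (n : ℕ) (v w : Fin n → ℕ) (W : ℕ) (k : ℕ) :
    (∃ x : Fin n → ℕ, (∀ i, x i ≤ 1) ∧ (∑ i, w i * x i) ≤ W ∧
        k ≤ ∑ i, v i * x i) ↔
    (∃ x y : Fin n → ℕ, (∀ i, x i + y i ≤ 1) ∧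
        (∑ i, w i * x i) ≤ (∑ i, 0 * y i) + W ∧
        k ≤ ∑ i, v i * x i) := by
  constructor
  · rintro ⟨x, hx, hw, hv⟩
    exact ⟨x, fun _ => 0, fun i => by simpa using hx i, by simpa using hw, hv⟩
  · rintro ⟨x, y, hxy, hw, hv⟩
    exact ⟨x, fun i => le_trans (Nat.le_add_right _ _) (hxy i), by simpa using hw, hv⟩
end
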